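/- arXiv:2601.23151 — 2 statements merged into one kernel-verified Lean document; each statement's English description precedes it below -/
import Mathlib

section
/- Let (Ω, 𝔽, ℙ) be a probability space, let k be a positive natural number, let σ > 0, and let N : Ω → EuclideanSpace ℝ (Fin k) be a random vector whose coordinates N₁, …, N_k are independent Gaussian random variables with mean 0 and variance σ². Then for every real r ≥ 0, ℙ(‖N‖ ≥ r) ≤ 2^{k/2} · exp(−r²/(4σ²)). -/
/-!
Apply the Chernoff bound to `‖N‖² = ∑ i, N i ²` with parameter `t = 1 / (4σ²)`. For a centered
Gaussian `X` of variance `v` and `2tv < 1`, completing the square in the Gaussian density gives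
`𝔼[exp (t X²)] = (1 - 2tv)^(-1/2)`, which is `√2` for this `t`; by independence the moment
generating function of the sum is `√2 ^ k = 2 ^ (k/2)`.
-/

open MeasureTheory ProbabilityTheory Real
open scoped NNReal

namespace ProbabilityTheory

variable {v : ℝ≥0} {t : ℝ}

lemma gaussianPDFReal_zero_mul_exp_mul_sq (hv : v ≠ 0) (t x : ℝ) :
    gaussianPDFReal 0 v x * rexp (t * x ^ 2)
      = (√(2 * π * v))⁻¹ * rexp (-((1 - 2 * t * v) / (2 * v)) * x ^ 2) := by
  have hv' : (v : ℝ) ≠ 0 := by exact_mod_cast hv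
  rw [gaussianPDFReal, mul_assoc, ← Real.exp_add]
  congr 2
  field_simp
  ring

lemma integrable_exp_mul_sq_gaussianReal (hv : v ≠ 0) (ht : 2 * t * v < 1) :
    Integrable (fun x ↦ rexp (t * x ^ 2)) (gaussianReal 0 v) := by
  have hb : 0 < (1 - 2 * t * v) / (2 * v) := div_pos (by linarith) (by positivity)
  rw [gaussianReal_of_var_ne_zero 0 hv, integrable_withDensity_iff_integrable_smul'
    (measurable_gaussianPDF 0 v) (.of_forall fun _ ↦ gaussianPDF_lt_top)]
  simp_rw [toReal_gaussianPDF, smul_eq_mul, gaussianPDFReal_zero_mul_exp_mul_sq hv]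
  exact (integrable_exp_neg_mul_sq hb).const_mul _

lemma integral_exp_mul_sq_gaussianReal (hv : v ≠ 0) (ht : 2 * t * v < 1) :
    ∫ x, rexp (t * x ^ 2) ∂gaussianReal 0 v = (√(1 - 2 * t * v))⁻¹ := by
  have hv' : (0 : ℝ) < v := by positivity
  have hb : 0 < 1 - 2 * t * v := by linarith
  simp_rw [integral_gaussianReal_eq_integral_smul hv, smul_eq_mul,
    gaussianPDFReal_zero_mul_exp_mul_sq hv, integral_const_mul, integral_gaussian]
  rw [div_div_eq_mul_div, ← sqrt_inv, ← sqrt_mul (by positivity), ← sqrt_inv]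
  congr 1
  field_simp

variable {Ω : Type*} {mΩ : MeasurableSpace Ω} {P : Measure Ω}

lemma integrable_exp_mul_sq_of_map_eq_gaussianReal {X : Ω → ℝ} (hXm : AEMeasurable X P)
    (hX : P.map X = gaussianReal 0 v) (hv : v ≠ 0) (ht : 2 * t * v < 1) :
    Integrable (fun ω ↦ rexp (t * X ω ^ 2)) P := by
  have h := integrable_exp_mul_sq_gaussianReal hv ht
  rw [← hX] at h
  exact h.comp_aemeasurable hXm

lemma mgf_sq_of_map_eq_gaussianReal {X : Ω → ℝ} (hXm : AEMeasurable X P)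
    (hX : P.map X = gaussianReal 0 v) (hv : v ≠ 0) (ht : 2 * t * v < 1) :
    mgf (fun ω ↦ X ω ^ 2) P t = (√(1 - 2 * t * v))⁻¹ := by
  rw [mgf, ← integral_exp_mul_sq_gaussianReal hv ht, ← hX,
    integral_map hXm (by fun_prop)]

lemma measureReal_sum_sq_ge_le_of_iIndepFun_gaussianReal {ι : Type*} [Fintype ι]
    {X : ι → Ω → ℝ} (hXm : ∀ i, Measurable (X i)) (hindep : iIndepFun X P)
    (hX : ∀ i, P.map (X i) = gaussianReal 0 v) (hv : v ≠ 0) (ht₀ : 0 ≤ t) (ht : 2 * t * v < 1)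
    (ε : ℝ) :
    P.real {ω | ε ≤ ∑ i, X i ω ^ 2} ≤ rexp (-t * ε) * (√(1 - 2 * t * v))⁻¹ ^ Fintype.card ι := by
  have : IsProbabilityMeasure P := hindep.isProbabilityMeasure
  have hindep_sq : iIndepFun (fun i ω ↦ X i ω ^ 2) P :=
    hindep.comp (fun _ x ↦ x ^ 2) fun _ ↦ by fun_prop
  calc P.real {ω | ε ≤ ∑ i, X i ω ^ 2}
      ≤ rexp (-t * ε) * mgf (∑ i, fun ω ↦ X i ω ^ 2) P t := by
        simpa only [Finset.sum_apply] using measure_ge_le_exp_mul_mgf ε ht₀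
          (hindep_sq.integrable_exp_mul_sum (by fun_prop) fun i _ ↦
            integrable_exp_mul_sq_of_map_eq_gaussianReal (hXm i).aemeasurable (hX i) hv ht)
    _ = rexp (-t * ε) * (√(1 - 2 * t * v))⁻¹ ^ Fintype.card ι := by
        rw [hindep_sq.mgf_sum (by fun_prop), Finset.prod_congr rfl fun i _ ↦
          mgf_sq_of_map_eq_gaussianReal (hXm i).aemeasurable (hX i) hv ht]
        simp

end ProbabilityTheory

theorem stmt3_general {Ω : Type*} [MeasureSpace Ω] [IsProbabilityMeasure (ℙ : Measure Ω)]
    (k : ℕ) (σ : ℝ) (hσ : 0 < σ)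
    (N : Ω → EuclideanSpace ℝ (Fin k)) (hNmeas : Measurable N)
    (hindep : iIndepFun (fun i ω => N ω i) ℙ)
    (hlaw : ∀ i, Measure.map (fun ω => N ω i) ℙ = gaussianReal 0 ⟨σ ^ 2, sq_nonneg σ⟩)
    (r : ℝ) (hr : 0 ≤ r) :
    ℙ {ω | r ≤ ‖N ω‖} ≤
      ENNReal.ofReal (2 ^ ((k : ℝ) / 2) * Real.exp (-(r ^ 2) / (4 * σ ^ 2))) := by
  have hv : (⟨σ ^ 2, sq_nonneg σ⟩ : ℝ≥0) ≠ 0 := by simp [hσ.ne']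
  have hhalf : 1 - 2 * (4 * σ ^ 2)⁻¹ * σ ^ 2 = 2⁻¹ := by
    field_simp
    norm_num
  have ht : 2 * (4 * σ ^ 2)⁻¹ * σ ^ 2 < 1 := by linarith
  have hset : {ω | r ≤ ‖N ω‖} = {ω | r ^ 2 ≤ ∑ i, N ω i ^ 2} := by
    ext ω
    simp only [Set.mem_ofPred_eq, ← pow_le_pow_iff_left₀ hr (norm_nonneg _) two_ne_zero,
      EuclideanSpace.norm_sq_eq, Real.norm_eq_abs, sq_abs]
  have hbound : (ℙ : Measure Ω).real {ω | r ^ 2 ≤ ∑ i, N ω i ^ 2}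
      ≤ rexp (-(4 * σ ^ 2)⁻¹ * r ^ 2)
        * (√(1 - 2 * (4 * σ ^ 2)⁻¹ * σ ^ 2))⁻¹ ^ Fintype.card (Fin k) :=
    measureReal_sum_sq_ge_le_of_iIndepFun_gaussianReal (t := (4 * σ ^ 2)⁻¹)
      (fun i ↦ by fun_prop) hindep hlaw hv (by positivity) ht (r ^ 2)
  rw [hset, ← ofReal_measureReal]
  refine ENNReal.ofReal_le_ofReal (hbound.trans_eq ?_)
  rw [hhalf, Fintype.card_fin, sqrt_inv, inv_inv, sqrt_eq_rpow, ← rpow_mul_natCast zero_le_two,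
    mul_comm, neg_mul, ← div_eq_inv_mul, neg_div]
  ring_nf

/-- Gaussian tail bound (Lemma C.3): if `N` is a random vector in `EuclideanSpace ℝ (Fin k)`
whose coordinates are independent centered Gaussians of variance `σ²`, then for every `r ≥ 0`,
`ℙ(‖N‖ ≥ r) ≤ 2 ^ (k/2) * exp (-r² / (4σ²))`. -/
theorem stmt3 {Ω : Type*} [MeasureSpace Ω] [IsProbabilityMeasure (ℙ : Measure Ω)]
    (k : ℕ) (hk : 0 < k) (σ : ℝ) (hσ : 0 < σ)
    (N : Ω → EuclideanSpace ℝ (Fin k)) (hNmeas : Measurable N)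
    (hindep : iIndepFun (fun i ω => N ω i) ℙ)
    (hlaw : ∀ i, Measure.map (fun ω => N ω i) ℙ = gaussianReal 0 ⟨σ ^ 2, sq_nonneg σ⟩)
    (r : ℝ) (hr : 0 ≤ r) :
    ℙ {ω | r ≤ ‖N ω‖} ≤
      ENNReal.ofReal (2 ^ ((k : ℝ) / 2) * Real.exp (-(r ^ 2) / (4 * σ ^ 2))) :=
  stmt3_general k σ hσ N hNmeas hindep hlaw r hr
end

section
/- Let E be a real inner product space, let c ∈ E, let R > 0, let σ > 0, let z₀ ∈ E with ‖z₀ − c‖ = R, and let (Ω, 𝔽, ℙ) be a probability space. Let Z : Ω → E be a random vector with ‖Z − c‖ = R almost surely, and let G : Ω → ℝ be a random variable whose law is Gaussian with mean 0 and variance σ² (no independence from Z is assumed). Define X = Z + (G/R) • (Z − c) and let Y : Ω → E be given by Y = c + (R/‖X − c‖) • (X − c) when X ≠ c and Y = z₀ otherwise. Then for every Borel set A ⊆ E, |ℙ(Z ∈ A) − ℙ(Y ∈ A)| ≤ √2 · exp(−R²/(4σ²)). -/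
open scoped Classical

open MeasureTheory ProbabilityTheory

/-!
Outside the event `{G ≤ -R}` the perturbation `X - c = (1 + G / R) • (Z - c)` is a positive
multiple of `Z - c`, so the radial projection recovers `Y = Z`. Hence `ℙ(Z ∈ A)` and `ℙ(Y ∈ A)`
differ by at most `ℙ(G ≤ -R)`, and the Chernoff bound for the centered Gaussian `G` gives
`ℙ(G ≤ -R) ≤ exp (-R² / (2σ²))`, which is below `√2 exp (-R² / (4σ²))`.
-/

open scoped NNReal

lemma hasSubgaussianMGF_id_gaussianReal (v : ℝ≥0) :
    HasSubgaussianMGF id v (gaussianReal 0 v) where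
  integrable_exp_mul := integrable_exp_mul_gaussianReal
  mgf_le t := by simp [mgf_id_gaussianReal]

lemma hasSubgaussianMGF_of_map_eq_gaussianReal {Ω : Type*} [MeasurableSpace Ω]
    {μ : Measure Ω} {X : Ω → ℝ} {v : ℝ≥0} (hX : μ.map X = gaussianReal 0 v) :
    HasSubgaussianMGF X v μ := by
  have hX_meas : AEMeasurable X μ := .of_map_ne_zero (by rw [hX]; exact NeZero.ne _)
  exact (hX ▸ hasSubgaussianMGF_id_gaussianReal v).of_map (X := id) hX_meas

lemma abs_measureReal_sub_le_of_subset_union {Ω : Type*} [MeasurableSpace Ω]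
    {μ : Measure Ω} [IsFiniteMeasure μ] {s t N : Set Ω}
    (hst : s ⊆ t ∪ N) (hts : t ⊆ s ∪ N) :
    |μ.real s - μ.real t| ≤ μ.real N := by
  rw [abs_sub_le_iff]
  constructor
  · linarith [measureReal_mono (μ := μ) hst, measureReal_union_le (μ := μ) t N]
  · linarith [measureReal_mono (μ := μ) hts, measureReal_union_le (μ := μ) s N]

lemma abs_measureReal_preimage_sub_le {Ω α : Type*} [MeasurableSpace Ω]
    {μ : Measure Ω} [IsFiniteMeasure μ] {f g : Ω → α} {N : Set Ω}
    (hfg : ∀ᵐ ω ∂μ, ω ∉ N → f ω = g ω) (A : Set α) :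
    |μ.real (f ⁻¹' A) - μ.real (g ⁻¹' A)| ≤ μ.real N := by
  have hsub : ∀ {f' g' : Ω → α}, f' ⁻¹' A ⊆ g' ⁻¹' A ∪ {ω | f' ω ≠ g' ω} := by
    intro f' g' ω hω
    by_cases h : f' ω = g' ω
    · exact Or.inl (by rwa [Set.mem_preimage, ← h])
    · exact Or.inr h
  have hne : {ω | f ω ≠ g ω} ≤ᵐ[μ] N :=
    hfg.mono fun ω h hne => by_contra fun hN => hne (h hN)
  calc |μ.real (f ⁻¹' A) - μ.real (g ⁻¹' A)|
      ≤ μ.real {ω | f ω ≠ g ω} := by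
        refine abs_measureReal_sub_le_of_subset_union hsub ?_
        simpa only [ne_comm] using hsub (f' := g) (g' := f)
    _ ≤ μ.real N := ENNReal.toReal_mono (measure_ne_top μ N) (measure_mono_ae hne)

lemma smul_div_norm_smul_of_pos {E : Type*} [NormedAddCommGroup E] [NormedSpace ℝ E]
    {s : ℝ} (hs : 0 < s) (v : E) : (‖v‖ / ‖s • v‖) • (s • v) = v := by
  rcases eq_or_ne v 0 with rfl | hv
  · simp
  · rw [smul_smul, norm_smul, Real.norm_eq_abs, abs_of_pos hs]
    have : ‖v‖ ≠ 0 := norm_ne_zero_iff.mpr hv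
    field_simp
    rw [one_smul]

theorem stmt17_general {E : Type*} [NormedAddCommGroup E] [InnerProductSpace ℝ E]
    [MeasurableSpace E]
    {Ω : Type*} [MeasureSpace Ω] [IsProbabilityMeasure (ℙ : Measure Ω)]
    (c : E) (R σ : ℝ) (hR : 0 < R)
    (z₀ : E)
    (Z : Ω → E) (hZ : ∀ᵐ ω ∂ℙ, ‖Z ω - c‖ = R)
    (G : Ω → ℝ) (hG : Measure.map G ℙ = gaussianReal 0 ⟨σ ^ 2, sq_nonneg σ⟩)
    (X : Ω → E) (hX : X = fun ω => Z ω + (G ω / R) • (Z ω - c))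
    (Y : Ω → E)
    (hY : Y = fun ω =>
      if X ω ≠ c then c + (R / ‖X ω - c‖) • (X ω - c) else z₀) :
    ∀ A : Set E, MeasurableSet A →
      |(ℙ (Z ⁻¹' A)).toReal - (ℙ (Y ⁻¹' A)).toReal| ≤
        Real.sqrt 2 * Real.exp (-(R ^ 2) / (4 * σ ^ 2)) := by
  intro A _
  have hZY : ∀ᵐ ω ∂ℙ, ω ∉ {ω | R ≤ -G ω} → Z ω = Y ω := by
    filter_upwards [hZ] with ω hZω hGω
    have hs : 0 < 1 + G ω / R := by
      have : -R < G ω := by simp only [not_le] at hGω; linarith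
      have : -1 < G ω / R := by rwa [lt_div_iff₀ hR, neg_one_mul]
      linarith
    have hXc : X ω - c = (1 + G ω / R) • (Z ω - c) := by rw [hX]; module
    have hZc : Z ω - c ≠ 0 := norm_pos_iff.mp (hZω ▸ hR)
    have hXne : X ω ≠ c := sub_ne_zero.mp (hXc ▸ smul_ne_zero hs.ne' hZc)
    simp only [hY, if_pos hXne]
    rw [← hZω, hXc, smul_div_norm_smul_of_pos hs, add_sub_cancel]
  have htail : (ℙ : Measure Ω).real {ω | R ≤ -G ω} ≤ Real.exp (-R ^ 2 / (2 * σ ^ 2)) :=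
    (hasSubgaussianMGF_of_map_eq_gaussianReal hG).neg.measure_ge_le hR.le
  calc |(ℙ : Measure Ω).real (Z ⁻¹' A) - (ℙ : Measure Ω).real (Y ⁻¹' A)|
      ≤ (ℙ : Measure Ω).real {ω | R ≤ -G ω} := abs_measureReal_preimage_sub_le hZY A
    _ ≤ Real.exp (-R ^ 2 / (2 * σ ^ 2)) := htail
    _ ≤ Real.exp (-R ^ 2 / (4 * σ ^ 2)) := by
        rw [Real.exp_le_exp, neg_div, neg_div, neg_le_neg_iff,
          show 4 * σ ^ 2 = 2 * σ ^ 2 * 2 by ring, ← div_div]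
        exact half_le_self (by positivity)
    _ ≤ Real.sqrt 2 * Real.exp (-(R ^ 2) / (4 * σ ^ 2)) :=
        le_mul_of_one_le_left (Real.exp_pos _).le Real.one_lt_sqrt_two.le

/-- Theorem 4.6 (Total Variation Bound) instantiated for the sphere constraint manifold,
stated setwise via the coupling `(Z, Y)`: if `Z` lies a.s. on the sphere of center `c` and
radius `R`, `G` is a centered Gaussian of variance `σ²`, `X = Z + (G/R) • (Z − c)` is the
normal perturbation of `Z`, and `Y` is the nearest-point projection of `X` onto the sphere
(set arbitrarily to `z₀` when `X = c`), then for every Borel set `A`,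
`|ℙ(Z ∈ A) − ℙ(Y ∈ A)| ≤ √2 exp (−R²/(4σ²))`. -/
theorem stmt17 {E : Type*} [NormedAddCommGroup E] [InnerProductSpace ℝ E]
    [MeasurableSpace E] [BorelSpace E]
    {Ω : Type*} [MeasureSpace Ω] [IsProbabilityMeasure (ℙ : Measure Ω)]
    (c : E) (R σ : ℝ) (hR : 0 < R) (hσ : 0 < σ)
    (z₀ : E) (hz₀ : ‖z₀ - c‖ = R)
    (Z : Ω → E) (hZmeas : Measurable Z) (hZ : ∀ᵐ ω ∂ℙ, ‖Z ω - c‖ = R)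
    (G : Ω → ℝ) (hG : Measure.map G ℙ = gaussianReal 0 ⟨σ ^ 2, sq_nonneg σ⟩)
    (X : Ω → E) (hX : X = fun ω => Z ω + (G ω / R) • (Z ω - c))
    (Y : Ω → E)
    (hY : Y = fun ω =>
      if X ω ≠ c then c + (R / ‖X ω - c‖) • (X ω - c) else z₀) :
    ∀ A : Set E, MeasurableSet A →
      |(ℙ (Z ⁻¹' A)).toReal - (ℙ (Y ⁻¹' A)).toReal| ≤
        Real.sqrt 2 * Real.exp (-(R ^ 2) / (4 * σ ^ 2)) :=
  stmt17_general c R σ hR z₀ Z hZ G hG X hX Y hY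
end
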